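/- Let λ > 0, α ∈ ℝ, and let (a_ε)_{ε>0} be continuous functions on [0,∞) with M := sup_{ε>0} ∫_0^∞ |a_ε(u)| du < ∞ and lim_{ε→0} ∫_y^z a_ε(u) du = α·[y = 0] for all 0 ≤ y < z; set 𝔞_ε(x) := 2∫_0^x a_ε and ω₁ := √(2λ e^{−2M}). For each ε > 0 let j_ε : [0,∞) → ℝ be continuous with j_ε(x) = 1 + 2λ ∫_0^x e^{−𝔞_ε(y)} ∫_0^y e^{𝔞_ε(z)} j_ε(z) dz dy and j_ε(x) ≥ cosh(ω₁ x) for all x ≥ 0, and define k_ε(x) := j_ε(x) ∫_0^x e^{−𝔞_ε(y)} / j_ε(y)² dy. Then, as ε → 0+, k_ε converges to the function x ↦ e^{−2α} sinh(√(2λ)·x)/√(2λ) uniformly on every compact subset of [0,∞). -/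

import Mathlib

open MeasureTheory Set Filter Topology Real

/-! Write `C x = cosh (√(2λ) x)`, the solution of the limiting equation
`C x = 1 + 2λ ∫₀ˣ ∫₀ʸ C`. Subtracting it from the equation for `j_ε`, the difference `j_ε - C`
satisfies a Gronwall inequality on `[0, R]` whose inhomogeneous term
`2λ ∫₀ˣ (e^{-𝔞_ε(y)} ∫₀ʸ e^{𝔞_ε} C - ∫₀ʸ C) dy` tends to `0` uniformly in `x`, by dominated
convergence: `|𝔞_ε| ≤ 2M` and `𝔞_ε → 2α` pointwise on `(0, R]`, so the two weights cancel in the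
limit. Hence `j_ε → C` uniformly on `[0, R]`. Since `j_ε ≥ 1`, dominated convergence again gives
`∫₀ˣ e^{-𝔞_ε}/j_ε² → e^{-2α} ∫₀ˣ 1/C² = e^{-2α} tanh (√(2λ) x)/√(2λ)` uniformly, and multiplying
by `j_ε x → C x` yields the limit. -/

section Primitive

variable {E : Type*} [NormedAddCommGroup E] {f : ℝ → E} {a b x : ℝ}

theorem ContinuousOn.intervalIntegrable_of_mem_Icc (hf : ContinuousOn f (Icc a b))
    (hx : x ∈ Icc a b) : IntervalIntegrable f volume a x :=
  (hf.mono (Icc_subset_Icc_right hx.2)).intervalIntegrable_of_Icc hx.1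

variable [NormedSpace ℝ E]

theorem continuousOn_primitive_of_integrableOn_Icc (hf : IntegrableOn f (Icc a b)) :
    ContinuousOn (fun x => ∫ t in a..x, f t) (Icc a b) :=
  (intervalIntegral.continuousOn_primitive hf).congr fun _ hx =>
    intervalIntegral.integral_of_le hx.1

theorem norm_intervalIntegral_le_integral_Ioi_norm (hf : IntegrableOn f (Ioi a)) (hx : a ≤ x) :
    ‖∫ t in a..x, f t‖ ≤ ∫ t in Ioi a, ‖f t‖ := by
  rw [intervalIntegral.integral_of_le hx]
  exact (norm_integral_le_integral_norm _).trans <| setIntegral_mono_set hf.norm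
    (ae_of_all _ fun _ => norm_nonneg _) Ioc_subset_Ioi_self.eventuallyLE

end Primitive

theorem le_mul_exp_of_le_add_mul_integral {u : ℝ → ℝ} {a b E K : ℝ} (hK : 0 ≤ K)
    (hu : ContinuousOn u (Icc a b)) (hle : ∀ x ∈ Icc a b, u x ≤ E + K * ∫ t in a..x, u t) :
    ∀ x ∈ Icc a b, u x ≤ E * exp (K * (x - a)) := by
  set G : ℝ → ℝ := fun x => E + K * ∫ t in a..x, u t
  have hG_deriv : ∀ x ∈ Ico a b, HasDerivWithinAt G (K * u x) (Ici x) x := by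
    intro x hx
    have hIcc : Icc a b ∈ 𝓝[>] x :=
      mem_nhdsWithin.2 ⟨Iio b, isOpen_Iio, hx.2, fun z hz => ⟨hx.1.trans hz.2.le, hz.1.le⟩⟩
    refine ((intervalIntegral.integral_hasDerivWithinAt_right
      (hu.intervalIntegrable_of_mem_Icc ⟨hx.1, hx.2.le⟩)
      ⟨_, hIcc, hu.aestronglyMeasurable measurableSet_Icc⟩ ?_).const_mul K).const_add E
    exact (hu x ⟨hx.1, hx.2.le⟩).mono_of_mem_nhdsWithin hIcc
  have hG : ∀ x ∈ Icc a b, G x ≤ gronwallBound E K 0 (x - a) :=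
    le_gronwallBound_of_liminf_deriv_right_le
      (continuousOn_const.add ((continuousOn_primitive_of_integrableOn_Icc
        (hu.integrableOn_Icc)).const_smul K))
      (fun x hx _ hr => (hG_deriv x hx).liminf_right_slope_le hr) (by simp [G])
      (fun x hx => by simpa using mul_le_mul_of_nonneg_left (hle x (Ico_subset_Icc_self hx)) hK)
  intro x hx
  simpa [gronwallBound_ε0] using (hle x hx).trans (hG x hx)

theorem tendstoUniformlyOn_zero_of_le_add_mul_integral {ι : Type*} {l : Filter ι}
    {u : ι → ℝ → ℝ} {a b K : ℝ} (hK : 0 ≤ K)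
    (hu : ∀ᶠ i in l, ContinuousOn (u i) (Icc a b) ∧ ∀ x ∈ Icc a b, 0 ≤ u i x)
    (hle : ∀ η > 0, ∀ᶠ i in l, ∀ x ∈ Icc a b, u i x ≤ η + K * ∫ t in a..x, u i t) :
    TendstoUniformlyOn u 0 l (Icc a b) := by
  rw [Metric.tendstoUniformlyOn_iff]
  intro η hη
  set η' := η / (2 * exp (K * (b - a)))
  filter_upwards [hu, hle η' (by positivity)] with i ⟨hc, hnn⟩ hi x hx
  rw [Pi.zero_apply, dist_zero_left, Real.norm_eq_abs, abs_of_nonneg (hnn x hx)]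
  calc u i x ≤ η' * exp (K * (x - a)) := le_mul_exp_of_le_add_mul_integral hK hc hi x hx
    _ ≤ η' * exp (K * (b - a)) := by gcongr; exact hx.2
    _ = η / 2 := by simp only [η']; field_simp
    _ < η := half_lt_self hη

theorem tendstoUniformlyOn_intervalIntegral_of_dominated {ι E : Type*} [NormedAddCommGroup E]
    [NormedSpace ℝ E] {l : Filter ι} [l.IsCountablyGenerated] {F : ι → ℝ → E} {f : ℝ → E}
    {a b C : ℝ} (hF : ∀ᶠ i in l, IntegrableOn (F i) (Ioc a b)) (hf : IntegrableOn f (Ioc a b))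
    (hbound : ∀ᶠ i in l, ∀ x ∈ Ioc a b, ‖F i x‖ ≤ C)
    (hlim : ∀ x ∈ Ioc a b, Tendsto (fun i => F i x) l (𝓝 (f x))) :
    TendstoUniformlyOn (fun i x => ∫ y in a..x, F i y) (fun x => ∫ y in a..x, f y) l
      (Icc a b) := by
  have herr : Tendsto (fun i => ∫ y in Ioc a b, ‖F i y - f y‖) l (𝓝 0) := by
    have := tendsto_integral_filter_of_dominated_convergence (μ := volume.restrict (Ioc a b))
      (fun y => C + ‖f y‖)
      (hF.mono fun i hi => (hi.sub hf).norm.aestronglyMeasurable)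
      (hbound.mono fun i hi => (ae_restrict_iff' measurableSet_Ioc).2 <| ae_of_all _ fun y hy =>
        by rw [norm_norm, Pi.sub_apply]; linarith [hi y hy, norm_sub_le (F i y) (f y)])
      ((integrableOn_const measure_Ioc_lt_top.ne).add hf.norm)
      ((ae_restrict_iff' measurableSet_Ioc).2 <| ae_of_all _ fun y hy =>
        (((hlim y hy).sub tendsto_const_nhds).norm))
    simpa using this
  rw [Metric.tendstoUniformlyOn_iff]
  intro η hη
  filter_upwards [hF, herr.eventually (gt_mem_nhds hη)] with i hFi hi x hx
  have hsub : Ioc a x ⊆ Ioc a b := Ioc_subset_Ioc_right hx.2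
  rw [dist_comm, dist_eq_norm, ← intervalIntegral.integral_sub
    ((intervalIntegrable_iff_integrableOn_Ioc_of_le hx.1).2 (hFi.mono_set hsub))
    ((intervalIntegrable_iff_integrableOn_Ioc_of_le hx.1).2 (hf.mono_set hsub))]
  calc ‖∫ y in a..x, F i y - f y‖ ≤ ∫ y in Ioc a x, ‖F i y - f y‖ := by
        rw [← uIoc_of_le hx.1]; exact intervalIntegral.norm_integral_le_integral_norm_uIoc
    _ ≤ ∫ y in Ioc a b, ‖F i y - f y‖ := setIntegral_mono_set (hFi.sub hf).norm
          (ae_of_all _ fun _ => norm_nonneg _) hsub.eventuallyLE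
    _ < η := hi

theorem cosh_mul_eq_one_add_sq_mul_integral_integral (ω x : ℝ) :
    cosh (ω * x) = 1 + ω ^ 2 * ∫ y in (0:ℝ)..x, ∫ z in (0:ℝ)..y, cosh (ω * z) := by
  have hsinh : ∀ y, ω * ∫ z in (0:ℝ)..y, cosh (ω * z) = sinh (ω * y) := fun y => by
    rw [← intervalIntegral.integral_const_mul, intervalIntegral.integral_eq_sub_of_hasDerivAt
      (fun z _ => by simpa [mul_comm] using ((hasDerivAt_id z).const_mul ω).sinh)
      (by apply Continuous.intervalIntegrable; fun_prop)]
    simp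
  have hcosh : ω * ∫ y in (0:ℝ)..x, sinh (ω * y) = cosh (ω * x) - 1 := by
    rw [← intervalIntegral.integral_const_mul, intervalIntegral.integral_eq_sub_of_hasDerivAt
      (fun z _ => by simpa [mul_comm] using ((hasDerivAt_id z).const_mul ω).cosh)
      (by apply Continuous.intervalIntegrable; fun_prop)]
    simp
  rw [pow_two, mul_assoc, ← intervalIntegral.integral_const_mul]
  simp_rw [hsinh, hcosh]
  ring

theorem cosh_mul_mul_integral_div_cosh_sq {ω : ℝ} (hω : ω ≠ 0) (c x : ℝ) :
    cosh (ω * x) * ∫ y in (0:ℝ)..x, c / cosh (ω * y) ^ 2 = c * sinh (ω * x) / ω := by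
  have hderiv : ∀ y, HasDerivAt (fun z => c * sinh (ω * z) / (ω * cosh (ω * z)))
      (c / cosh (ω * y) ^ 2) y := fun y => by
    have hlin : HasDerivAt (fun z => ω * z) ω y := by simpa using (hasDerivAt_id y).const_mul ω
    refine ((hlin.sinh.const_mul c).div (hlin.cosh.const_mul ω) (by positivity)).congr_deriv ?_
    have := cosh_sq_sub_sinh_sq (ω * y)
    field_simp
    linear_combination c * this
  rw [intervalIntegral.integral_eq_sub_of_hasDerivAt (fun y _ => hderiv y)
    (Continuous.intervalIntegrable (continuous_const.div (by fun_prop) fun y => by positivity) _ _)]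
  field_simp
  simp

/-- `weightedPrimitive A f` solves `g' + A' g = f`, `g 0 = 0`; with `A = 𝔞_ε` the integral equation
for `j_ε` reads `j_ε = 1 + 2λ ∫₀ˣ weightedPrimitive 𝔞_ε j_ε`. -/
noncomputable def weightedPrimitive (A f : ℝ → ℝ) (y : ℝ) : ℝ :=
  exp (-A y) * ∫ z in (0:ℝ)..y, exp (A z) * f z

section WeightedPrimitive

variable {A f g : ℝ → ℝ} {M R x y : ℝ}

theorem continuousOn_weightedPrimitive (hA : ContinuousOn A (Icc 0 R))
    (hf : ContinuousOn f (Icc 0 R)) : ContinuousOn (weightedPrimitive A f) (Icc 0 R) :=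
  (continuous_exp.comp_continuousOn hA.neg).mul <| continuousOn_primitive_of_integrableOn_Icc
    ((continuous_exp.comp_continuousOn hA).mul hf).integrableOn_Icc

theorem weightedPrimitive_sub (hA : ContinuousOn A (Icc 0 R)) (hf : ContinuousOn f (Icc 0 R))
    (hg : ContinuousOn g (Icc 0 R)) (hy : y ∈ Icc 0 R) :
    weightedPrimitive A f y - weightedPrimitive A g y = weightedPrimitive A (f - g) y := by
  have hexpA : ContinuousOn (fun z => exp (A z)) (Icc 0 R) := continuous_exp.comp_continuousOn hA
  have h := intervalIntegral.integral_sub ((hexpA.mul hf).intervalIntegrable_of_mem_Icc hy)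
    ((hexpA.mul hg).intervalIntegrable_of_mem_Icc hy)
  simp only [Pi.mul_apply] at h
  simp only [weightedPrimitive, Pi.sub_apply, mul_sub]
  rw [h, mul_sub]

theorem abs_weightedPrimitive_le (hA : ∀ z ∈ Icc 0 x, |A z| ≤ M) (hf : ContinuousOn f (Icc 0 x))
    (hy : y ∈ Icc 0 x) :
    |weightedPrimitive A f y| ≤ exp (2 * M) * ∫ z in (0:ℝ)..x, |f z| := by
  have hexp_le : ∀ z ∈ Icc 0 x, exp (A z) ≤ exp M ∧ exp (-A z) ≤ exp M := fun z hz => by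
    have := abs_le.1 (hA z hz)
    exact ⟨exp_le_exp.2 (by linarith), exp_le_exp.2 (by linarith)⟩
  have hsub : Icc 0 y ⊆ Icc 0 x := Icc_subset_Icc_right hy.2
  have hinner : |∫ z in (0:ℝ)..y, exp (A z) * f z| ≤ exp M * ∫ z in (0:ℝ)..x, |f z| := by
    calc |∫ z in (0:ℝ)..y, exp (A z) * f z| ≤ ∫ z in (0:ℝ)..y, exp M * |f z| := by
          refine intervalIntegral.norm_integral_le_of_norm_le (f := fun z => exp (A z) * f z) hy.1
            (ae_of_all _ fun z hz => ?_)
            ((continuousOn_const.mul hf.abs).intervalIntegrable_of_mem_Icc hy)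
          rw [Real.norm_eq_abs, abs_mul, abs_of_pos (exp_pos _)]
          exact mul_le_mul_of_nonneg_right (hexp_le z ⟨hz.1.le, hz.2.trans hy.2⟩).1 (abs_nonneg _)
      _ ≤ exp M * ∫ z in (0:ℝ)..x, |f z| := by
          rw [intervalIntegral.integral_const_mul]
          gcongr
          exact intervalIntegral.integral_mono_interval le_rfl hy.1 hy.2
            (ae_of_all _ fun _ => abs_nonneg _)
            (hf.abs.intervalIntegrable_of_mem_Icc ⟨hy.1.trans hy.2, le_rfl⟩)
  rw [weightedPrimitive, abs_mul, abs_of_pos (exp_pos _), two_mul, exp_add, mul_assoc]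
  exact mul_le_mul (hexp_le y hy).2 hinner (abs_nonneg _) (exp_nonneg _)

end WeightedPrimitive

theorem abs_sub_cosh_mul_le {A j : ℝ → ℝ} {ω M x : ℝ} (hx : 0 ≤ x)
    (hA : ContinuousOn A (Icc 0 x)) (hAM : ∀ y ∈ Icc 0 x, |A y| ≤ M)
    (hj : ContinuousOn j (Icc 0 x))
    (hjx : j x = 1 + ω ^ 2 * ∫ y in (0:ℝ)..x, weightedPrimitive A j y) :
    |j x - cosh (ω * x)| ≤
      ω ^ 2 * |(∫ y in (0:ℝ)..x, weightedPrimitive A (fun t => cosh (ω * t)) y) -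
        ∫ y in (0:ℝ)..x, ∫ z in (0:ℝ)..y, cosh (ω * z)| +
      ω ^ 2 * x * exp (2 * M) * ∫ t in (0:ℝ)..x, |j t - cosh (ω * t)| := by
  set C : ℝ → ℝ := fun t => cosh (ω * t)
  have hC : ContinuousOn C (Icc 0 x) := by fun_prop
  have hmem : x ∈ Icc 0 x := ⟨hx, le_rfl⟩
  have hsplit : j x - C x = ω ^ 2 * (∫ y in (0:ℝ)..x, weightedPrimitive A (j - C) y) +
      ω ^ 2 * ((∫ y in (0:ℝ)..x, weightedPrimitive A C y) -
        ∫ y in (0:ℝ)..x, ∫ z in (0:ℝ)..y, C z) := by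
    have hW := fun f (hf : ContinuousOn f (Icc 0 x)) =>
      (continuousOn_weightedPrimitive hA hf).intervalIntegrable_of_mem_Icc hmem
    have hCx : C x = 1 + ω ^ 2 * ∫ y in (0:ℝ)..x, ∫ z in (0:ℝ)..y, C z :=
      cosh_mul_eq_one_add_sq_mul_integral_integral ω x
    rw [hjx, hCx, ← intervalIntegral.integral_congr fun y hy =>
        weightedPrimitive_sub hA hj hC (uIcc_of_le hx ▸ hy),
      intervalIntegral.integral_sub (hW _ hj) (hW _ hC)]
    ring
  have hWD : |∫ y in (0:ℝ)..x, weightedPrimitive A (j - C) y| ≤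
      exp (2 * M) * (∫ t in (0:ℝ)..x, |j t - C t|) * x := by
    simpa [abs_of_nonneg hx] using intervalIntegral.norm_integral_le_of_norm_le_const
      (f := weightedPrimitive A (j - C)) fun y hy =>
        abs_weightedPrimitive_le hAM (hj.sub hC) (Ioc_subset_Icc_self (uIoc_of_le hx ▸ hy))
  rw [hsplit]
  refine (abs_add_le _ _).trans ?_
  rw [abs_mul, abs_mul, abs_of_nonneg (sq_nonneg ω)]
  linarith [mul_le_mul_of_nonneg_left hWD (sq_nonneg ω)]

section Convergence

variable {ι : Type*} {l : Filter ι} [l.IsCountablyGenerated] {A : ι → ℝ → ℝ} {β M R : ℝ}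

theorem tendsto_weightedPrimitive {f : ℝ → ℝ}
    (hA : ∀ᶠ i in l, ContinuousOn (A i) (Icc 0 R) ∧ ∀ y ∈ Icc 0 R, |A i y| ≤ M)
    (hAlim : ∀ y ∈ Ioc 0 R, Tendsto (A · y) l (𝓝 β)) (hf : ContinuousOn f (Icc 0 R))
    {y : ℝ} (hy : y ∈ Ioc 0 R) :
    Tendsto (fun i => weightedPrimitive (A i) f y) l (𝓝 (∫ z in (0:ℝ)..y, f z)) := by
  obtain ⟨B, hB⟩ := isCompact_Icc.exists_bound_of_continuousOn hf
  have hinner : Tendsto (fun i => ∫ z in (0:ℝ)..y, exp (A i z) * f z) l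
      (𝓝 (∫ z in (0:ℝ)..y, exp β * f z)) := by
    refine (tendstoUniformlyOn_intervalIntegral_of_dominated
      (F := fun i z => exp (A i z) * f z) (C := exp M * B)
      (hA.mono fun _ hi =>
        ((continuous_exp.comp_continuousOn hi.1).mul hf).integrableOn_Icc.mono_set
          Ioc_subset_Icc_self)
      ((continuousOn_const.mul hf).integrableOn_Icc.mono_set Ioc_subset_Icc_self)
      (hA.mono fun i hi z hz => ?_)
      (fun z hz => ((continuous_exp.tendsto _).comp (hAlim z hz)).mul_const _)).tendsto_at
        ⟨hy.1.le, hy.2⟩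
    rw [norm_mul, Real.norm_eq_abs, abs_of_pos (exp_pos _)]
    exact mul_le_mul (exp_le_exp.2 (le_of_abs_le (hi.2 z (Ioc_subset_Icc_self hz))))
      (hB z (Ioc_subset_Icc_self hz)) (norm_nonneg _) (exp_nonneg _)
  have hout := ((continuous_exp.tendsto _).comp (hAlim y hy).neg).mul hinner
  rwa [intervalIntegral.integral_const_mul, ← mul_assoc, ← exp_add, neg_add_cancel, exp_zero,
    one_mul] at hout

theorem tendstoUniformlyOn_integral_weightedPrimitive {f : ℝ → ℝ}
    (hA : ∀ᶠ i in l, ContinuousOn (A i) (Icc 0 R) ∧ ∀ y ∈ Icc 0 R, |A i y| ≤ M)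
    (hAlim : ∀ y ∈ Ioc 0 R, Tendsto (A · y) l (𝓝 β)) (hf : ContinuousOn f (Icc 0 R)) :
    TendstoUniformlyOn (fun i x => ∫ y in (0:ℝ)..x, weightedPrimitive (A i) f y)
      (fun x => ∫ y in (0:ℝ)..x, ∫ z in (0:ℝ)..y, f z) l (Icc 0 R) :=
  tendstoUniformlyOn_intervalIntegral_of_dominated (C := exp (2 * M) * ∫ z in (0:ℝ)..R, |f z|)
    (hA.mono fun _ hi => (continuousOn_weightedPrimitive hi.1 hf).integrableOn_Icc.mono_set
      Ioc_subset_Icc_self)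
    ((continuousOn_primitive_of_integrableOn_Icc hf.integrableOn_Icc).integrableOn_Icc.mono_set
      Ioc_subset_Icc_self)
    (hA.mono fun _ hi _ hy => abs_weightedPrimitive_le hi.2 hf (Ioc_subset_Icc_self hy))
    (fun _ hy => tendsto_weightedPrimitive hA hAlim hf hy)

theorem tendstoUniformlyOn_cosh_of_eq_one_add_integral_weightedPrimitive {j : ι → ℝ → ℝ} {ω : ℝ}
    (hA : ∀ᶠ i in l, ContinuousOn (A i) (Icc 0 R) ∧ ∀ y ∈ Icc 0 R, |A i y| ≤ M)
    (hAlim : ∀ y ∈ Ioc 0 R, Tendsto (A · y) l (𝓝 β))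
    (hj : ∀ᶠ i in l, ContinuousOn (j i) (Icc 0 R) ∧
      ∀ x ∈ Icc 0 R, j i x = 1 + ω ^ 2 * ∫ y in (0:ℝ)..x, weightedPrimitive (A i) (j i) y) :
    TendstoUniformlyOn j (fun x => cosh (ω * x)) l (Icc 0 R) := by
  rcases lt_or_ge R 0 with hR | hR
  · simpa [Icc_eq_empty_of_lt hR] using tendstoUniformlyOn_empty
  set C : ℝ → ℝ := fun x => cosh (ω * x)
  have hC : ContinuousOn C (Icc 0 R) := by fun_prop
  have hWC := tendstoUniformlyOn_integral_weightedPrimitive hA hAlim hC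
  set K := ω ^ 2 * R * exp (2 * M)
  have hu := tendstoUniformlyOn_zero_of_le_add_mul_integral (u := fun i x => |j i x - C x|)
    (K := K) (by positivity) (hj.mono fun _ hi => ⟨(hi.1.sub hC).abs, fun _ _ => abs_nonneg _⟩)
    (fun η hη => ?_)
  · rw [Metric.tendstoUniformlyOn_iff] at hu ⊢
    intro η hη
    filter_upwards [hu η hη] with i hi x hx
    simpa [Real.dist_eq, abs_sub_comm] using hi x hx
  rw [Metric.tendstoUniformlyOn_iff] at hWC
  filter_upwards [hA, hj, hWC (η / (ω ^ 2 + 1)) (by positivity)] with i ⟨hAc, hAM⟩ ⟨hjc, hjeq⟩ hWCi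
    x hx
  have hsub : Icc 0 x ⊆ Icc 0 R := Icc_subset_Icc_right hx.2
  have hle := abs_sub_cosh_mul_le hx.1 (hAc.mono hsub) (fun y hy => hAM y (hsub hy))
    (hjc.mono hsub) (hjeq x hx)
  have hsmall : ω ^ 2 * |(∫ y in (0:ℝ)..x, weightedPrimitive (A i) C y) -
      ∫ y in (0:ℝ)..x, ∫ z in (0:ℝ)..y, C z| ≤ η := by
    have := hWCi x hx
    rw [Real.dist_eq, abs_sub_comm] at this
    calc ω ^ 2 * _ ≤ (ω ^ 2 + 1) * (η / (ω ^ 2 + 1)) := by gcongr; linarith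
      _ = η := by field_simp
  have hK : ω ^ 2 * x * exp (2 * M) * ∫ t in (0:ℝ)..x, |j i t - C t| ≤
      K * ∫ t in (0:ℝ)..x, |j i t - C t| := by
    have : 0 ≤ ∫ t in (0:ℝ)..x, |j i t - C t| :=
      intervalIntegral.integral_nonneg hx.1 fun t _ => abs_nonneg _
    gcongr
    simp only [K]
    gcongr
    exact hx.2
  linarith

theorem tendstoUniformlyOn_mul_integral_exp_neg_div_sq [l.NeBot] {j : ι → ℝ → ℝ} {g : ℝ → ℝ}
    (hA : ∀ᶠ i in l, ContinuousOn (A i) (Icc 0 R) ∧ ∀ y ∈ Icc 0 R, |A i y| ≤ M)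
    (hAlim : ∀ y ∈ Ioc 0 R, Tendsto (A · y) l (𝓝 β))
    (hj : ∀ᶠ i in l, ContinuousOn (j i) (Icc 0 R) ∧ ∀ y ∈ Icc 0 R, 1 ≤ j i y)
    (hjg : TendstoUniformlyOn j g l (Icc 0 R)) :
    TendstoUniformlyOn (fun i x => j i x * ∫ y in (0:ℝ)..x, exp (-A i y) / j i y ^ 2)
      (fun x => g x * ∫ y in (0:ℝ)..x, exp (-β) / g y ^ 2) l (Icc 0 R) := by
  have hgc : ContinuousOn g (Icc 0 R) := hjg.continuousOn (hj.mono fun _ hi => hi.1).frequently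
  have hg1 : ∀ y ∈ Icc 0 R, 1 ≤ g y := fun y hy =>
    ge_of_tendsto (hjg.tendsto_at hy) (hj.mono fun _ hi => hi.2 y hy)
  have hlimc : ContinuousOn (fun y => exp (-β) / g y ^ 2) (Icc 0 R) :=
    continuousOn_const.div (hgc.pow 2) fun y hy => by have := hg1 y hy; positivity
  have hI : TendstoUniformlyOn (fun i x => ∫ y in (0:ℝ)..x, exp (-A i y) / j i y ^ 2)
      (fun x => ∫ y in (0:ℝ)..x, exp (-β) / g y ^ 2) l (Icc 0 R) := by
    refine tendstoUniformlyOn_intervalIntegral_of_dominated (C := exp M)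
      ((hA.and hj).mono fun _ ⟨hAi, hji⟩ => ?_)
      (hlimc.integrableOn_Icc.mono_set Ioc_subset_Icc_self)
      ((hA.and hj).mono fun _ ⟨hAi, hji⟩ y hy => ?_) fun y hy => ?_
    · refine (ContinuousOn.integrableOn_Icc ?_).mono_set Ioc_subset_Icc_self
      exact (continuous_exp.comp_continuousOn hAi.1.neg).div (hji.1.pow 2)
        fun y hy => by have := hji.2 y hy; positivity
    · have h1 := hji.2 y (Ioc_subset_Icc_self hy)
      rw [Real.norm_eq_abs, abs_of_nonneg (by positivity)]
      exact (div_le_self (exp_nonneg _) (one_le_pow₀ h1)).trans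
        (exp_le_exp.2 (neg_le.2 (neg_le_of_abs_le (hAi.2 y (Ioc_subset_Icc_self hy)))))
    · exact ((continuous_exp.tendsto _).comp (hAlim y hy).neg).div
        ((hjg.tendsto_at (Ioc_subset_Icc_self hy)).pow 2)
        (by have := hg1 y (Ioc_subset_Icc_self hy); positivity)
  rw [← tendstoLocallyUniformlyOn_iff_tendstoUniformlyOn_of_compact isCompact_Icc] at hjg hI ⊢
  exact hjg.mul₀ hI hgc (continuousOn_primitive_of_integrableOn_Icc hlimc.integrableOn_Icc)

end Convergence

theorem stmt16_general (lam α M : ℝ) (hlam : 0 < lam)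
    (a : ℝ → ℝ → ℝ)
    (haint : ∀ ε > (0:ℝ), IntegrableOn (a ε) (Ioi 0))
    (haM : ∀ ε > (0:ℝ), ∫ x in Ioi (0:ℝ), |a ε x| ≤ M)
    (hlim : ∀ y z : ℝ, 0 ≤ y → y < z →
      Tendsto (fun ε => ∫ u in y..z, a ε u) (𝓝[>] (0:ℝ))
        (𝓝 (α * (if y = 0 then 1 else 0))))
    (j : ℝ → ℝ → ℝ)
    (hjcont : ∀ ε > (0:ℝ), ContinuousOn (j ε) (Ici 0))
    (hjeq : ∀ ε > (0:ℝ), ∀ x ≥ (0:ℝ),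
      j ε x = 1 + 2 * lam * ∫ y in (0:ℝ)..x,
        Real.exp (-(2 * ∫ u in (0:ℝ)..y, a ε u)) *
          ∫ z in (0:ℝ)..y, Real.exp (2 * ∫ u in (0:ℝ)..z, a ε u) * j ε z)
    (hjlb : ∀ ε > (0:ℝ), ∀ x ≥ (0:ℝ),
      Real.cosh (Real.sqrt (2 * lam * Real.exp (-2 * M)) * x) ≤ j ε x) :
    ∀ Kc : Set ℝ, Kc ⊆ Ici 0 → IsCompact Kc →
      TendstoUniformlyOn
        (fun ε x => j ε x *
          ∫ y in (0:ℝ)..x, Real.exp (-(2 * ∫ u in (0:ℝ)..y, a ε u)) / (j ε y) ^ 2)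
        (fun x => Real.exp (-2 * α) * Real.sinh (Real.sqrt (2 * lam) * x) /
          Real.sqrt (2 * lam))
        (𝓝[>] (0:ℝ)) Kc := by
  intro Kc hKsub hKc
  obtain ⟨R, hRK⟩ : ∃ R, Kc ⊆ Icc 0 R := by
    obtain ⟨R, hR⟩ := hKc.bddAbove
    exact ⟨R, fun x hx => ⟨hKsub hx, hR hx⟩⟩
  have hω : √(2 * lam) ^ 2 = 2 * lam := sq_sqrt (by positivity)
  have hA : ∀ᶠ ε in 𝓝[>] (0:ℝ), ContinuousOn (fun y => 2 * ∫ u in (0:ℝ)..y, a ε u) (Icc 0 R) ∧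
      ∀ y ∈ Icc 0 R, |2 * ∫ u in (0:ℝ)..y, a ε u| ≤ 2 * M := by
    filter_upwards [self_mem_nhdsWithin] with ε hε
    refine ⟨continuousOn_const.mul (continuousOn_primitive_of_integrableOn_Icc ?_), fun y hy => ?_⟩
    · rw [integrableOn_Icc_iff_integrableOn_Ioc]
      exact (haint ε hε).mono_set Ioc_subset_Ioi_self
    · rw [abs_mul, abs_two]
      gcongr
      exact (norm_intervalIntegral_le_integral_Ioi_norm (haint ε hε) hy.1).trans (haM ε hε)
  have hAlim : ∀ y ∈ Ioc 0 R,
      Tendsto (fun ε => 2 * ∫ u in (0:ℝ)..y, a ε u) (𝓝[>] (0:ℝ)) (𝓝 (2 * α)) := fun y hy => by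
    simpa using (hlim 0 y le_rfl hy.1).const_mul 2
  have hj : ∀ᶠ ε in 𝓝[>] (0:ℝ), ContinuousOn (j ε) (Icc 0 R) ∧ ∀ x ∈ Icc 0 R, j ε x =
      1 + √(2 * lam) ^ 2 * ∫ y in (0:ℝ)..x,
        weightedPrimitive (fun y => 2 * ∫ u in (0:ℝ)..y, a ε u) (j ε) y := by
    filter_upwards [self_mem_nhdsWithin] with ε hε
    exact ⟨(hjcont ε hε).mono Icc_subset_Ici_self, fun x hx => by rw [hω]; exact hjeq ε hε x hx.1⟩
  have hj1 : ∀ᶠ ε in 𝓝[>] (0:ℝ), ContinuousOn (j ε) (Icc 0 R) ∧ ∀ y ∈ Icc 0 R, 1 ≤ j ε y := by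
    filter_upwards [self_mem_nhdsWithin] with ε hε
    exact ⟨(hjcont ε hε).mono Icc_subset_Ici_self,
      fun y hy => (one_le_cosh _).trans (hjlb ε hε y hy.1)⟩
  refine ((tendstoUniformlyOn_mul_integral_exp_neg_div_sq hA hAlim hj1
    (tendstoUniformlyOn_cosh_of_eq_one_add_integral_weightedPrimitive hA hAlim hj)).congr_right
    fun x _ => ?_).mono hRK
  rw [cosh_mul_mul_integral_div_cosh_sq (sqrt_pos.2 (by positivity)).ne', neg_mul]

/-- with `j_ε` the solution of the integral equation for
`(1/2)j'' + a_ε j' = λj`, `j(0)=1`, `j'(0)=0`, bounded below by `cosh(ω₁x)` with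
`ω₁ = √(2λe^{−2M})`, the increasing eigenfunctions
`k_ε(x) = j_ε(x)∫_0^x e^{−𝔞_ε(y)}/j_ε(y)² dy` converge, as `ε → 0+`, to
`x ↦ e^{−2α} sinh(√(2λ)x)/√(2λ)` uniformly on compact subsets of `[0,∞)`. -/
theorem stmt16 (lam α M : ℝ) (hlam : 0 < lam)
    (a : ℝ → ℝ → ℝ)
    (hacont : ∀ ε > (0:ℝ), ContinuousOn (a ε) (Ici 0))
    (haint : ∀ ε > (0:ℝ), IntegrableOn (a ε) (Ioi 0))
    (haM : ∀ ε > (0:ℝ), ∫ x in Ioi (0:ℝ), |a ε x| ≤ M)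
    (hlim : ∀ y z : ℝ, 0 ≤ y → y < z →
      Tendsto (fun ε => ∫ u in y..z, a ε u) (𝓝[>] (0:ℝ))
        (𝓝 (α * (if y = 0 then 1 else 0))))
    (j : ℝ → ℝ → ℝ)
    (hjcont : ∀ ε > (0:ℝ), ContinuousOn (j ε) (Ici 0))
    (hjeq : ∀ ε > (0:ℝ), ∀ x ≥ (0:ℝ),
      j ε x = 1 + 2 * lam * ∫ y in (0:ℝ)..x,
        Real.exp (-(2 * ∫ u in (0:ℝ)..y, a ε u)) *
          ∫ z in (0:ℝ)..y, Real.exp (2 * ∫ u in (0:ℝ)..z, a ε u) * j ε z)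
    (hjlb : ∀ ε > (0:ℝ), ∀ x ≥ (0:ℝ),
      Real.cosh (Real.sqrt (2 * lam * Real.exp (-2 * M)) * x) ≤ j ε x) :
    ∀ Kc : Set ℝ, Kc ⊆ Ici 0 → IsCompact Kc →
      TendstoUniformlyOn
        (fun ε x => j ε x *
          ∫ y in (0:ℝ)..x, Real.exp (-(2 * ∫ u in (0:ℝ)..y, a ε u)) / (j ε y) ^ 2)
        (fun x => Real.exp (-2 * α) * Real.sinh (Real.sqrt (2 * lam) * x) /
          Real.sqrt (2 * lam))
        (𝓝[>] (0:ℝ)) Kc :=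
  stmt16_general lam α M hlam a haint haM hlim j hjcont hjeq hjlb
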